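/- Let ξ = (τ_L, δ_L, τ_R, δ_R) ∈ Φ and write g²(ξ) = (τ_{L,2}, δ_{L,2}, τ_{R,2}, δ_{R,2}). Then τ_{L,2} > τ_L²·τ_R² and τ_{R,2} < τ_L·τ_R. -/
import Mathlib


noncomputable section

/-- The parameter region `Φ`: `τ_L > δ_L + 1`, `δ_L > 0`, `τ_R < -(δ_R + 1)`, `δ_R > 0`. -/
def PhiSet : Set (ℝ × ℝ × ℝ × ℝ) :=
  {ξ | ξ.1 > ξ.2.1 + 1 ∧ 0 < ξ.2.1 ∧ ξ.2.2.1 < -(ξ.2.2.2 + 1) ∧ 0 < ξ.2.2.2}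

/-- The renormalisation operator `g`. -/
def gmap (ξ : ℝ × ℝ × ℝ × ℝ) : ℝ × ℝ × ℝ × ℝ :=
  (ξ.2.2.1 ^ 2 - 2 * ξ.2.2.2, ξ.2.2.2 ^ 2, ξ.1 * ξ.2.2.1 - ξ.2.1 - ξ.2.2.2, ξ.2.1 * ξ.2.2.2)

/-- Lemma 6.7: for `ξ ∈ Φ`, writing `g²(ξ) = (τ_{L,2}, δ_{L,2}, τ_{R,2}, δ_{R,2})`,
one has `τ_{L,2} > τ_L² τ_R²` and `τ_{R,2} < τ_L τ_R`. -/
theorem g2_bounds (ξ : ℝ × ℝ × ℝ × ℝ) (hξ : ξ ∈ PhiSet) :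
    ξ.1 ^ 2 * ξ.2.2.1 ^ 2 < (gmap (gmap ξ)).1 ∧
    (gmap (gmap ξ)).2.2.1 < ξ.1 * ξ.2.2.1 := by
  obtain ⟨t, d, s, e⟩ := ξ
  obtain ⟨h1, h2, h3, h4⟩ := hξ
  simp only [PhiSet, Set.mem_setOf_eq] at *
  simp only [gmap]
  have ht : 1 < t := by linarith
  have hs : s < -1 := by linarith
  have hts : t * s < -1 := by nlinarith
  constructor
  · nlinarith [sq_nonneg (d + e), sq_nonneg (d - e), mul_pos h2 h4]
  · have hfac : 1 < s ^ 2 - 2 * e := by nlinarith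
    have h5 : t * s - d - e < -1 := by linarith
    nlinarith [mul_pos h2 h4, sq_nonneg e, mul_lt_mul_of_pos_left h5 (by linarith : (0:ℝ) < s^2 - 2*e)]
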